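/- An even-order monotone Z-tensor is a nonsingular M-tensor: if A = s I − B with m even, s > 0, B entrywise nonnegative, and A is monotone, then s > ρ(B). -/

import Mathlib

noncomputable section

/-- The tensor-vector product `(A x^{m-1})_i` for an `m`-order, `n`-dimensional real tensor,
represented as `A : Fin n → (Fin (m-1) → Fin n) → ℝ` (first index, then the remaining indices). -/
def tmul {n k : ℕ} (A : Fin n → (Fin k → Fin n) → ℝ) (x : Fin n → ℝ) (i : Fin n) : ℝ :=
  ∑ js : Fin k → Fin n, A i js * ∏ j, x (js j)

/-- A tensor is semi-positive if there is an entrywise positive `x` with `A x^{m-1} > 0`. -/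
def SemiPositive {n k : ℕ} (A : Fin n → (Fin k → Fin n) → ℝ) : Prop :=
  ∃ x : Fin n → ℝ, (∀ i, 0 < x i) ∧ ∀ i, 0 < tmul A x i

/-- The complex tensor-vector product. -/
def ctprod {n k : ℕ} (A : Fin n → (Fin k → Fin n) → ℝ) (x : Fin n → ℂ) (i : Fin n) : ℂ :=
  ∑ js : Fin k → Fin n, (A i js : ℂ) * ∏ j, x (js j)

/-- `lam` is an eigenvalue of `A` if `A x^{m-1} = lam x^{[m-1]}` for some nonzero complex `x`. -/
def IsEigenvalue {n k : ℕ} (A : Fin n → (Fin k → Fin n) → ℝ) (lam : ℂ) : Prop :=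
  ∃ x : Fin n → ℂ, x ≠ 0 ∧ ∀ i, ctprod A x i = lam * x i ^ k

/-- The spectral radius: the maximum modulus of the eigenvalues. -/
def specRad {n k : ℕ} (A : Fin n → (Fin k → Fin n) → ℝ) : ℝ :=
  sSup ((fun lam : ℂ => ‖lam‖) '' {lam | IsEigenvalue A lam})

/-- The unit tensor: diagonal entries 1, off-diagonal entries 0. -/
def unitT (n k : ℕ) : Fin n → (Fin k → Fin n) → ℝ :=
  fun i js => if js = (fun _ => i) then 1 else 0

/-- A Z-tensor: all off-diagonal entries are nonpositive. -/
def ZTensor {n k : ℕ} (A : Fin n → (Fin k → Fin n) → ℝ) : Prop :=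
  ∀ i js, js ≠ (fun _ => i) → A i js ≤ 0

/-- A monotone tensor: `A x^{m-1} ≥ 0` implies `x ≥ 0`. -/
def MonotoneT {n k : ℕ} (A : Fin n → (Fin k → Fin n) → ℝ) : Prop :=
  ∀ x : Fin n → ℝ, (∀ i, 0 ≤ tmul A x i) → ∀ i, 0 ≤ x i


lemma tmul_unit {n k : ℕ} (s : ℝ) (y : Fin n → ℝ) (i : Fin n) :
    (∑ js : Fin k → Fin n, s * unitT n k i js * ∏ j, y (js j)) = s * y i ^ k := by
  simp only [unitT, mul_ite, ite_mul, mul_one, mul_zero, zero_mul]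
  rw [Finset.sum_ite_eq' Finset.univ (fun _ => i) (fun js => s * ∏ j, y (js j))]
  simp [Finset.prod_const]

lemma tmul_sub {n k : ℕ} (s : ℝ) (B : Fin n → (Fin k → Fin n) → ℝ) (y : Fin n → ℝ) (i : Fin n) :
    tmul (fun i js => s * unitT n k i js - B i js) y i = s * y i ^ k - tmul B y i := by
  unfold tmul
  simp only [sub_mul, Finset.sum_sub_distrib]
  rw [tmul_unit]

lemma tmul_neg {n k : ℕ} (hk : Odd k) (A : Fin n → (Fin k → Fin n) → ℝ) (y : Fin n → ℝ) (i : Fin n) :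
    tmul A (fun j => - y j) i = - tmul A y i := by
  unfold tmul
  rw [← Finset.sum_neg_distrib]
  refine Finset.sum_congr rfl fun js _ => ?_
  have : (∏ j, -y (js j)) = - ∏ j, y (js j) := by
    calc (∏ j : Fin k, -y (js j)) = ∏ j : Fin k, (-1) * y (js j) := by simp
      _ = (-1)^k * ∏ j, y (js j) := by
          rw [Finset.prod_mul_distrib, Finset.prod_const, Finset.card_univ, Fintype.card_fin]
      _ = - ∏ j, y (js j) := by rw [hk.neg_one_pow]; ring
  rw [this]; ring

lemma eig_lt {n k : ℕ} (hk : Odd k) (s : ℝ)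
    (B : Fin n → (Fin k → Fin n) → ℝ) (hB : ∀ i js, 0 ≤ B i js)
    (hmono : MonotoneT (fun i js => s * unitT n k i js - B i js))
    (lam : ℂ) (hl : IsEigenvalue B lam) : ‖lam‖ < s := by
  by_contra h
  push_neg at h
  obtain ⟨x, hx0, hx⟩ := hl
  set y : Fin n → ℝ := fun i => ‖x i‖ with hy
  have key : ∀ i, ‖lam‖ * y i ^ k ≤ tmul B y i := by
    intro i
    have h1 : ‖lam‖ * y i ^ k = ‖ctprod B x i‖ := by
      rw [hx i, norm_mul, norm_pow]
    have h2 : ‖ctprod B x i‖ ≤ tmul B y i := by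
      unfold ctprod tmul
      refine (norm_sum_le _ _).trans ?_
      refine Finset.sum_le_sum fun js _ => ?_
      rw [norm_mul, Complex.norm_real, Real.norm_of_nonneg (hB i js), norm_prod]
    linarith
  have hneg : ∀ i, 0 ≤ tmul (fun i js => s * unitT n k i js - B i js) (fun j => - y j) i := by
    intro i
    rw [tmul_neg hk, tmul_sub]
    have hyk : 0 ≤ y i ^ k := pow_nonneg (norm_nonneg _) k
    have := key i
    nlinarith [mul_le_mul_of_nonneg_right h hyk]
  have := hmono _ hneg
  apply hx0
  funext i
  have h1 := this i
  have h2 : y i = 0 := le_antisymm (by linarith) (norm_nonneg _)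
  exact norm_eq_zero.mp h2

lemma specRad_lt {n k : ℕ} (hn : 0 < n) (s : ℝ) (hs : 0 < s)
    (B : Fin n → (Fin k → Fin n) → ℝ) (hB : ∀ i js, 0 ≤ B i js)
    (hlt : ∀ lam, IsEigenvalue B lam → ‖lam‖ < s) : specRad B < s := by
  have : Nonempty (Fin n) := ⟨⟨0, hn⟩⟩
  set S := (fun lam : ℂ => ‖lam‖) '' {lam | IsEigenvalue B lam} with hS
  rcases S.eq_empty_or_nonempty with he | hne
  · rw [specRad, ← hS, he, Real.sSup_empty]; exact hs
  · set K : Set (ℂ × (Fin n → ℂ)) :=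
      {p | ‖p.2‖ = 1 ∧ ∀ i, ctprod B p.2 i = p.1 * p.2 i ^ k} with hKdef
    have hKc : IsClosed K := by
      have hKeq : K = {p : ℂ × (Fin n → ℂ) | ‖p.2‖ = 1} ∩
          ⋂ i, {p | ctprod B p.2 i = p.1 * p.2 i ^ k} := by
        ext p; simp [hKdef, Set.mem_iInter]
      rw [hKeq]
      refine (isClosed_eq (continuous_norm.comp continuous_snd) continuous_const).inter
        (isClosed_iInter fun i => isClosed_eq ?_ ?_)
      · unfold ctprod
        exact continuous_finset_sum _ fun js _ => continuous_const.mul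
          (continuous_finset_prod _ fun j _ => (continuous_apply (js j)).comp continuous_snd)
      · exact continuous_fst.mul (((continuous_apply i).comp continuous_snd).pow k)
    set R : ℝ := ∑ i, ∑ js, B i js with hR
    have habs : ∀ p ∈ K, ‖p.1‖ ≤ R := by
      rintro ⟨lam, x⟩ ⟨hnorm, heq⟩
      obtain ⟨i, -, hi⟩ := Finset.exists_max_image Finset.univ
        (fun i => ‖x i‖) Finset.univ_nonempty
      have hx0 : x ≠ 0 := norm_ne_zero_iff.mp (by rw [hnorm]; exact one_ne_zero)
      have hxipos : 0 < ‖x i‖ := by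
        rcases Function.ne_iff.mp hx0 with ⟨j, hj⟩
        exact lt_of_lt_of_le (norm_pos_iff.mpr hj) (hi j (Finset.mem_univ j))
      have h1 : ‖lam‖ * ‖x i‖ ^ k ≤
          (∑ js, B i js) * ‖x i‖ ^ k := by
        have := heq i
        calc ‖lam‖ * ‖x i‖ ^ k
            = ‖ctprod B x i‖ := by rw [this, norm_mul, norm_pow]
          _ ≤ ∑ js : Fin k → Fin n, B i js * ∏ j, ‖x (js j)‖ := by
              unfold ctprod
              refine (norm_sum_le _ _).trans (Finset.sum_le_sum fun js _ => ?_)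
              rw [norm_mul, Complex.norm_real, Real.norm_of_nonneg (hB i js), norm_prod]
          _ ≤ ∑ js : Fin k → Fin n, B i js * ‖x i‖ ^ k := by
              refine Finset.sum_le_sum fun js _ => mul_le_mul_of_nonneg_left ?_ (hB i js)
              calc (∏ j, ‖x (js j)‖) ≤ ∏ j : Fin k, ‖x i‖ :=
                    Finset.prod_le_prod (fun j _ => norm_nonneg _)
                      (fun j _ => hi (js j) (Finset.mem_univ _))
                _ = ‖x i‖ ^ k := by
                    rw [Finset.prod_const, Finset.card_univ, Fintype.card_fin]
          _ = (∑ js, B i js) * ‖x i‖ ^ k := by rw [Finset.sum_mul]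
      have h2 : ‖lam‖ ≤ ∑ js, B i js :=
        le_of_mul_le_mul_right (by simpa using h1) (pow_pos hxipos k)
      refine h2.trans ?_
      exact Finset.single_le_sum (fun j _ => Finset.sum_nonneg fun js _ => hB j js)
        (Finset.mem_univ i)
    have hKb : Bornology.IsBounded K := by
      rw [isBounded_iff_forall_norm_le]
      refine ⟨max R 1, fun p hp => ?_⟩
      rw [Prod.norm_def]
      exact max_le_max (by exact habs p hp) (le_of_eq hp.1)
    have hK : IsCompact K := Metric.isCompact_of_isClosed_isBounded hKc hKb
    have hSK : S = (fun p : ℂ × (Fin n → ℂ) => ‖p.1‖) '' K := by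
      ext r; constructor
      · rintro ⟨lam, ⟨x, hx0, hx⟩, rfl⟩
        have hxn : ‖x‖ ≠ 0 := norm_ne_zero_iff.mpr hx0
        set c : ℂ := (‖x‖ : ℂ)⁻¹ with hc
        refine ⟨(lam, c • x), ⟨?_, ?_⟩, rfl⟩
        · rw [norm_smul, hc, norm_inv, Complex.norm_real, norm_norm]
          exact inv_mul_cancel₀ hxn
        · intro i
          have hcp : ctprod B (c • x) i = c ^ k * ctprod B x i := by
            unfold ctprod; rw [Finset.mul_sum]
            refine Finset.sum_congr rfl fun js _ => ?_
            simp only [Pi.smul_apply, smul_eq_mul, Finset.prod_mul_distrib,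
              Finset.prod_const, Finset.card_univ, Fintype.card_fin]
            ring
          rw [hcp, hx i]
          show c ^ k * (lam * x i ^ k) = lam * (c * x i) ^ k
          rw [mul_pow]; ring
      · rintro ⟨⟨lam, x⟩, ⟨hn1, heq⟩, rfl⟩
        exact ⟨lam, ⟨x, norm_ne_zero_iff.mp (by rw [hn1]; exact one_ne_zero), heq⟩, rfl⟩
    have hSc : IsCompact S := by
      rw [hSK]
      exact hK.image (continuous_norm.comp continuous_fst)
    have hmem : sSup S ∈ S := hSc.sSup_mem hne
    obtain ⟨lam, hlam, heqq⟩ := hmem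
    rw [specRad, ← hS, ← heqq]
    exact hlt lam hlam

/-- An even-order monotone Z-tensor `A = s I - B` (`s > 0`, `B ≥ 0`) is a
nonsingular M-tensor: `s > ρ(B)`. -/
theorem stmt16 {n m : ℕ} (hn : 0 < n) (hm : 2 ≤ m) (hme : Even m) (s : ℝ) (hs : 0 < s)
    (B : Fin n → (Fin (m-1) → Fin n) → ℝ) (hB : ∀ i js, 0 ≤ B i js)
    (hmono : MonotoneT (fun i js => s * unitT n (m-1) i js - B i js)) :
    specRad B < s := by
  have hk : Odd (m - 1) := Nat.Even.sub_odd (le_trans one_le_two hm) hme odd_one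
  exact specRad_lt hn s hs B hB fun lam hl => eig_lt hk s B hB hmono lam hl
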